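/- Let G be a group with elements a, b, y satisfying y² = 1, yay = a⁻¹, yby = b⁻¹, and aba = bab. Then G-elements a and by generate the subgroup ⟨a, b, y⟩; in particular b and y lie in the subgroup generated by a and by. -/

import Mathlib

/-!
Since the involution `y` inverts `a`, conjugating `a⁻¹` by `b * y` gives `b * a * b⁻¹`; by the
braid relation, conjugating that by `a` gives back `b`. Hence `b`, and then `y = b⁻¹ * (b * y)`,
lie in the subgroup generated by `a` and `b * y`.
-/

section

variable {G : Type*} [Group G]

theorem conj_eq_of_braid {a b : G} (hbraid : a * b * a = b * a * b) :
    a * b * a * (a * b)⁻¹ = b := by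
  rw [hbraid]; group

theorem conj_inv_eq_of_conj_eq_inv {a y : G} (hy : y ^ 2 = 1) (hya : y * a * y = a⁻¹) :
    y * a⁻¹ * y⁻¹ = a := by
  have hyinv : y⁻¹ = y := inv_eq_of_mul_eq_one_right (by rw [← sq, hy])
  calc y * a⁻¹ * y⁻¹ = (y * a * y⁻¹)⁻¹ := by group
    _ = a := by rw [hyinv, hya, inv_inv]

namespace Subgroup

theorem mem_closure_pair_mul_of_mem {a b y : G} (hb : b ∈ closure ({a, b * y} : Set G)) :
    y ∈ closure ({a, b * y} : Set G) := by
  simpa using mul_mem (inv_mem hb) (subset_closure (by simp) : b * y ∈ closure {a, b * y})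

theorem closure_pair_mul_eq_closure_triple {a b y : G} (hb : b ∈ closure ({a, b * y} : Set G)) :
    closure ({a, b * y} : Set G) = closure ({a, b, y} : Set G) := by
  refine le_antisymm (closure_le _ |>.mpr ?_) (closure_le _ |>.mpr ?_)
  · rintro x (rfl | rfl)
    · exact subset_closure (by simp)
    · exact mul_mem (subset_closure (by simp)) (subset_closure (by simp))
  · rintro x (rfl | rfl | rfl)
    · exact subset_closure (by simp)
    · exact hb
    · exact mem_closure_pair_mul_of_mem hb

end Subgroup

end

theorem stmt_11_general {G : Type*} [Group G] (a b y : G)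
    (hy : y ^ 2 = 1) (hya : y * a * y = a⁻¹)
    (hbraid : a * b * a = b * a * b) :
    Subgroup.closure ({a, b * y} : Set G) = Subgroup.closure ({a, b, y} : Set G) ∧
      b ∈ Subgroup.closure ({a, b * y} : Set G) ∧
      y ∈ Subgroup.closure ({a, b * y} : Set G) := by
  have ha : a ∈ Subgroup.closure ({a, b * y} : Set G) := Subgroup.subset_closure (by simp)
  have hby : b * y ∈ Subgroup.closure ({a, b * y} : Set G) := Subgroup.subset_closure (by simp)
  have hb_conj : a * (b * y) * a⁻¹ * (a * (b * y))⁻¹ = b := by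
    calc a * (b * y) * a⁻¹ * (a * (b * y))⁻¹ = a * b * (y * a⁻¹ * y⁻¹) * (a * b)⁻¹ := by group
      _ = b := by rw [conj_inv_eq_of_conj_eq_inv hy hya, conj_eq_of_braid hbraid]
  have hb : b ∈ Subgroup.closure ({a, b * y} : Set G) := by
    have hmem := mul_mem (mul_mem (mul_mem ha hby) (inv_mem ha)) (inv_mem (mul_mem ha hby))
    rwa [hb_conj] at hmem
  exact ⟨Subgroup.closure_pair_mul_eq_closure_triple hb, hb,
    Subgroup.mem_closure_pair_mul_of_mem hb⟩

theorem stmt_11 {G : Type*} [Group G] (a b y : G)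
    (hy : y ^ 2 = 1) (hya : y * a * y = a⁻¹) (hyb : y * b * y = b⁻¹)
    (hbraid : a * b * a = b * a * b) :
    Subgroup.closure ({a, b * y} : Set G) = Subgroup.closure ({a, b, y} : Set G) ∧
      b ∈ Subgroup.closure ({a, b * y} : Set G) ∧
      y ∈ Subgroup.closure ({a, b * y} : Set G) :=
  stmt_11_general a b y hy hya hbraid
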